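/- For every real ν and every fixed x > 0, the difference between the Macdonald function and the Shu function satisfies t^{ν+1} · e^{t} · ( K_ν(x) - S_ν(x,t) ) → (1/2)·(x/2)^ν as t → +∞, where K_ν(x) = (1/2)·(x/2)^ν · ∫_0^∞ τ^{-(ν+1)} · exp(-τ - x²/(4τ)) dτ. In particular S_ν(x,t) → K_ν(x) as t → +∞. -/

import Mathlib

/-!
With `f τ = τ^(-(ν+1)) e^(-τ - x²/(4τ))`, the difference `K_ν(x) - S_ν(x,t)` is
`(1/2)(x/2)^ν ∫_t^∞ f`. Substituting `τ = s + t`,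
`t^(ν+1) e^t f(s + t) = ((s+t)/t)^(-(ν+1)) e^(-s) e^(-x²/(4(s+t)))`,
which tends to `e^(-s)` as `t → ∞` and, for `t ≥ 1`, is dominated by `(1+s)^|ν+1| e^(-s)`;
dominated convergence gives `t^(ν+1) e^t ∫_t^∞ f → ∫_0^∞ e^(-s) = 1`.
Since `t^(ν+1) e^t → ∞`, the second limit follows.
Integrability of `f` near `0` comes from `e^(-y) ≤ n!/y^n` with `y = x²/(4τ)` and `n > ν`.
-/

open Real MeasureTheory Filter

/-- The Shu function `S_ν(x,t) = (1/2)(x/2)^ν ∫_0^t τ^{-(ν+1)} e^{-τ - x²/(4τ)} dτ`. -/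
noncomputable def shu (ν x t : ℝ) : ℝ :=
  (1/2) * (x/2) ^ ν * ∫ τ in (0:ℝ)..t, τ ^ (-(ν+1)) * Real.exp (-τ - x^2 / (4*τ))

/-- The Macdonald function `K_ν(x) = (1/2)(x/2)^ν ∫_0^∞ τ^{-(ν+1)} e^{-τ - x²/(4τ)} dτ`. -/
noncomputable def macdonald (ν x : ℝ) : ℝ :=
  (1/2) * (x/2) ^ ν * ∫ τ in Set.Ioi (0:ℝ), τ ^ (-(ν+1)) * Real.exp (-τ - x^2 / (4*τ))

open Set

noncomputable def shuKernel (ν x τ : ℝ) : ℝ := τ ^ (-(ν+1)) * exp (-τ - x^2 / (4*τ))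

lemma measurable_shuKernel (ν x : ℝ) : Measurable (shuKernel ν x) := by
  unfold shuKernel; fun_prop

lemma exp_neg_le_factorial_div_pow {y : ℝ} (hy : 0 < y) (n : ℕ) :
    exp (-y) ≤ n.factorial / y ^ n := by
  rw [exp_neg, ← inv_div]
  exact inv_anti₀ (by positivity) (pow_div_factorial_le_exp _ hy.le n)

lemma shuKernel_le (ν : ℝ) {x τ : ℝ} (hx : x ≠ 0) (hτ : 0 < τ) (n : ℕ) :
    shuKernel ν x τ ≤ n.factorial * (4 / x^2) ^ n * (exp (-τ) * τ ^ ((n - ν) - 1)) := by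
  have hpow : τ ^ ((n - ν) - 1) = τ ^ (-(ν+1)) * τ ^ n := by
    rw [← rpow_natCast, ← rpow_add hτ]; ring_nf
  calc shuKernel ν x τ = τ ^ (-(ν+1)) * exp (-τ) * exp (-(x^2 / (4*τ))) := by
        rw [shuKernel, mul_assoc, ← exp_add, sub_eq_add_neg]
    _ ≤ τ ^ (-(ν+1)) * exp (-τ) * (n.factorial / (x^2 / (4*τ)) ^ n) := by
        gcongr; exact exp_neg_le_factorial_div_pow (by positivity) n
    _ = n.factorial * (4 / x^2) ^ n * (exp (-τ) * τ ^ ((n - ν) - 1)) := by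
        rw [hpow, div_pow, div_pow, mul_pow]; field_simp

lemma integrableOn_shuKernel (ν : ℝ) {x : ℝ} (hx : x ≠ 0) :
    IntegrableOn (shuKernel ν x) (Ioi 0) := by
  obtain ⟨n, hn⟩ := exists_nat_gt ν
  have hGamma : IntegrableOn (fun τ : ℝ => exp (-τ) * τ ^ ((n - ν) - 1)) (Ioi 0) :=
    GammaIntegral_convergent (by linarith)
  refine (hGamma.const_mul (n.factorial * (4 / x^2) ^ n)).mono'
    (measurable_shuKernel ν x).aestronglyMeasurable ?_
  filter_upwards [ae_restrict_mem measurableSet_Ioi] with τ (hτ : 0 < τ)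
  rw [norm_of_nonneg (by unfold shuKernel; positivity)]
  exact shuKernel_le ν hx hτ n

lemma setIntegral_Ioi_eq_setIntegral_Ioi_zero_comp_add {E : Type*} [NormedAddCommGroup E]
    [NormedSpace ℝ E] (f : ℝ → E) (t : ℝ) :
    ∫ τ in Ioi t, f τ = ∫ s in Ioi 0, f (s + t) := by
  have hpre : (· + t) ⁻¹' Ioi t = Ioi (0 : ℝ) := by ext s; simp
  rw [← (measurePreserving_add_right volume t).setIntegral_preimage_emb
    (measurableEmbedding_addRight t) f (Ioi t), hpre]

lemma integrableOn_one_add_rpow_mul_exp_neg {c : ℝ} (hc : -1 < c) :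
    IntegrableOn (fun s : ℝ => (1 + s) ^ c * exp (-s)) (Ioi 0) := by
  have hGamma : IntegrableOn (fun u : ℝ => exp 1 * (exp (-u) * u ^ (c + 1 - 1))) (Ioi 1) :=
    ((GammaIntegral_convergent (by linarith)).mono_set (Ioi_subset_Ioi zero_le_one)).const_mul _
  have hpre : (· + 1) ⁻¹' Ioi 1 = Ioi (0 : ℝ) := by ext s; simp
  rw [← (measurePreserving_add_right volume 1).integrableOn_comp_preimage
    (measurableEmbedding_addRight 1), hpre] at hGamma
  refine hGamma.congr_fun (fun s _ => ?_) measurableSet_Ioi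
  simp only [Function.comp_apply, add_sub_cancel_right, neg_add, exp_add, add_comm s 1]
  rw [exp_neg 1]
  field_simp

lemma rpow_mul_exp_mul_shuKernel_add (ν x : ℝ) {s t : ℝ} (ht : 0 < t) (hst : 0 < s + t) :
    t ^ (ν+1) * exp t * shuKernel ν x (s + t) =
      ((s + t) / t) ^ (-(ν+1)) * exp (-s) * exp (-(x^2 / (4 * (s + t)))) := by
  have hexp : exp t * exp (-(s + t) - x^2 / (4 * (s + t))) =
      exp (-s) * exp (-(x^2 / (4 * (s + t)))) := by
    rw [← exp_add, ← exp_add]; ring_nf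
  rw [shuKernel, div_rpow hst.le ht.le, rpow_neg ht.le, div_inv_eq_mul]
  linear_combination t ^ (ν+1) * (s + t) ^ (-(ν+1)) * hexp

lemma div_rpow_neg_le_one_add_rpow_abs (ν : ℝ) {s t : ℝ} (hs : 0 ≤ s) (ht : 1 ≤ t) :
    ((s + t) / t) ^ (-(ν+1)) ≤ (1 + s) ^ |ν + 1| := by
  have ht0 : 0 < t := zero_lt_one.trans_le ht
  calc ((s + t) / t) ^ (-(ν+1)) ≤ ((s + t) / t) ^ |ν + 1| :=
        rpow_le_rpow_of_exponent_le ((one_le_div ht0).2 (by linarith)) (neg_le_abs _)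
    _ ≤ (1 + s) ^ |ν + 1| := by
        gcongr
        rw [div_le_iff₀ ht0]; nlinarith

lemma tendsto_rpow_mul_exp_mul_shuKernel_add (ν x s : ℝ) :
    Tendsto (fun t => t ^ (ν+1) * exp t * shuKernel ν x (s + t)) atTop (nhds (exp (-s))) := by
  have hratio : Tendsto (fun t : ℝ => (s + t) / t) atTop (nhds 1) := by
    have h := ((tendsto_const_nhds (x := s)).div_atTop tendsto_id).add_const 1
    rw [zero_add] at h
    refine h.congr' ?_
    filter_upwards [eventually_gt_atTop 0] with t ht
    simp only [id, add_div, div_self ht.ne']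
  have hpow : Tendsto (fun t => ((s + t) / t) ^ (-(ν+1))) atTop (nhds 1) := by
    simpa using hratio.rpow_const (Or.inl one_ne_zero)
  have hgauss : Tendsto (fun t => exp (-(x^2 / (4 * (s + t))))) atTop (nhds 1) := by
    have h : Tendsto (fun t => x^2 / (4 * (s + t))) atTop (nhds 0) :=
      tendsto_const_nhds.div_atTop
        ((tendsto_atTop_add_const_left _ s tendsto_id).const_mul_atTop four_pos)
    simpa using h.neg.rexp
  have h := (hpow.mul_const (exp (-s))).mul hgauss
  rw [one_mul, mul_one] at h
  refine h.congr' ?_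
  filter_upwards [eventually_gt_atTop 0, eventually_gt_atTop (-s)] with t ht hst
  exact (rpow_mul_exp_mul_shuKernel_add ν x ht (by linarith)).symm

lemma tendsto_rpow_mul_exp_mul_integral_Ioi_shuKernel (ν x : ℝ) :
    Tendsto (fun t => t ^ (ν+1) * exp t * ∫ τ in Ioi t, shuKernel ν x τ) atTop (nhds 1) := by
  have hlim : Tendsto (fun t => ∫ s in Ioi 0, t ^ (ν+1) * exp t * shuKernel ν x (s + t)) atTop
      (nhds (∫ s in Ioi 0, exp (-s))) := by
    refine tendsto_integral_filter_of_dominated_convergence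
      (fun s => (1 + s) ^ |ν + 1| * exp (-s)) ?_ ?_
      (integrableOn_one_add_rpow_mul_exp_neg (by linarith [abs_nonneg (ν + 1)])) ?_
    · exact Eventually.of_forall fun t =>
        (((measurable_shuKernel ν x).comp (measurable_add_const t)).const_mul
          _).aestronglyMeasurable
    · filter_upwards [eventually_ge_atTop 1] with t ht
      filter_upwards [ae_restrict_mem measurableSet_Ioi] with s (hs : 0 < s)
      rw [rpow_mul_exp_mul_shuKernel_add ν x (by linarith) (by linarith),
        norm_of_nonneg (by positivity)]
      calc _ ≤ (1 + s) ^ |ν + 1| * exp (-s) * 1 := by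
            gcongr
            · exact div_rpow_neg_le_one_add_rpow_abs ν hs.le ht
            · exact exp_le_one_iff.2 (neg_nonpos.2 (by positivity))
        _ = _ := mul_one _
    · exact Eventually.of_forall fun s => tendsto_rpow_mul_exp_mul_shuKernel_add ν x s
  rw [integral_exp_neg_Ioi_zero] at hlim
  refine hlim.congr fun t => ?_
  rw [setIntegral_Ioi_eq_setIntegral_Ioi_zero_comp_add (shuKernel ν x) t, integral_const_mul]

lemma tendsto_rpow_mul_exp_atTop (a : ℝ) :
    Tendsto (fun t : ℝ => t ^ a * exp t) atTop atTop := by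
  refine (tendsto_exp_div_rpow_atTop (-a)).congr' ?_
  filter_upwards [eventually_gt_atTop 0] with t ht
  rw [rpow_neg ht.le, div_inv_eq_mul, mul_comm]

lemma macdonald_sub_shu (ν : ℝ) {x t : ℝ} (hx : x ≠ 0) (ht : 0 ≤ t) :
    macdonald ν x - shu ν x t = (1/2) * (x/2) ^ ν * ∫ τ in Ioi t, shuKernel ν x τ := by
  have hint := integrableOn_shuKernel ν hx
  have hsplit : ∫ τ in Ioi 0, shuKernel ν x τ =
      (∫ τ in Ioc 0 t, shuKernel ν x τ) + ∫ τ in Ioi t, shuKernel ν x τ := by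
    rw [← Ioc_union_Ioi_eq_Ioi ht]
    exact setIntegral_union (Ioc_disjoint_Ioi le_rfl) measurableSet_Ioi
      (hint.mono_set Ioc_subset_Ioi_self) (hint.mono_set (Ioi_subset_Ioi ht))
  change (1/2) * (x/2) ^ ν * (∫ τ in Ioi 0, shuKernel ν x τ)
    - (1/2) * (x/2) ^ ν * (∫ τ in 0..t, shuKernel ν x τ) = _
  rw [intervalIntegral.integral_of_le ht, hsplit]
  ring

theorem stmt_15 (ν x : ℝ) (hx : 0 < x) :
    Tendsto (fun t : ℝ => t ^ (ν+1) * Real.exp t * (macdonald ν x - shu ν x t))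
        atTop (nhds ((1/2) * (x/2) ^ ν)) ∧
    Tendsto (fun t : ℝ => shu ν x t) atTop (nhds (macdonald ν x)) := by
  have hscaled : Tendsto (fun t : ℝ => t ^ (ν+1) * exp t * (macdonald ν x - shu ν x t))
      atTop (nhds ((1/2) * (x/2) ^ ν)) := by
    have h := (tendsto_rpow_mul_exp_mul_integral_Ioi_shuKernel ν x).const_mul ((1/2) * (x/2) ^ ν)
    rw [mul_one] at h
    refine h.congr' ?_
    filter_upwards [eventually_ge_atTop 0] with t ht
    rw [macdonald_sub_shu ν hx.ne' ht]
    ring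
  refine ⟨hscaled, ?_⟩
  have hdiff : Tendsto (fun t => macdonald ν x - shu ν x t) atTop (nhds 0) := by
    refine (hscaled.div_atTop (tendsto_rpow_mul_exp_atTop (ν+1))).congr' ?_
    filter_upwards [eventually_gt_atTop 0] with t ht
    field_simp
  simpa using hdiff.const_sub (macdonald ν x)
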